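/- Origin lemma for the fixpoint with duplicate elimination: let φ : Multiset τ → Multiset τ be an additive monoid homomorphism, R a multiset, and define S_0 = dedup(R), S_{n+1} = dedup(R + φ(S_n)). Then for every n and every element a ∈ S_n, there exist r ∈ R and k ≤ n such that a ∈ φ^k({r}), where {r} is the singleton multiset and φ^k is k-fold iteration of φ. -/
import Mathlib


/-- The fixpoint sequence with duplicate elimination:
`S 0 = dedup R`, `S (n+1) = dedup (R + φ (S n))`. -/
def fixSeqD {τ : Type*} [DecidableEq τ] (φ : Multiset τ → Multiset τ)
    (R : Multiset τ) : ℕ → Multiset τ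
  | 0 => R.dedup
  | n + 1 => (R + φ (fixSeqD φ R n)).dedup

private lemma phi_mem_decomp {τ : Type*} (φ : Multiset τ → Multiset τ)
    (hφ0 : φ 0 = 0) (hφadd : ∀ a b : Multiset τ, φ (a + b) = φ a + φ b) :
    ∀ (S : Multiset τ) (a : τ), a ∈ φ S → ∃ s ∈ S, a ∈ φ {s} := by
  intro S
  induction S using Multiset.induction_on with
  | empty => intro a ha; rw [show (0 : Multiset τ) = 0 from rfl, hφ0] at ha; simp at ha
  | cons x t ih =>
    intro a ha
    rw [show (x ::ₘ t) = ({x} + t : Multiset τ) by simp, hφadd] at ha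
    rcases Multiset.mem_add.mp ha with h | h
    · exact ⟨x, Multiset.mem_cons_self x t, h⟩
    · obtain ⟨s, hs, h⟩ := ih a h
      exact ⟨s, Multiset.mem_cons_of_mem hs, h⟩

private lemma phi_mono {τ : Type*} (φ : Multiset τ → Multiset τ)
    (hφadd : ∀ a b : Multiset τ, φ (a + b) = φ a + φ b)
    {A B : Multiset τ} (h : A ≤ B) : φ A ≤ φ B := by
  obtain ⟨C, rfl⟩ := Multiset.le_iff_exists_add.mp h
  rw [hφadd]; exact Multiset.le_add_right _ _

/-- Origin lemma: every element of the fixpoint sequence originates from some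
element of `R` by iterating `φ`. -/
theorem fixpoint_origin {τ : Type*} [DecidableEq τ]
    (φ : Multiset τ → Multiset τ)
    (hφ0 : φ 0 = 0) (hφadd : ∀ a b : Multiset τ, φ (a + b) = φ a + φ b)
    (R : Multiset τ) :
    ∀ n, ∀ a ∈ fixSeqD φ R n, ∃ r ∈ R, ∃ k ≤ n, a ∈ φ^[k] {r} := by
  intro n
  induction n with
  | zero =>
    intro a ha
    simp only [fixSeqD, Multiset.mem_dedup] at ha
    exact ⟨a, ha, 0, le_refl 0, by simp⟩
  | succ n ih =>
    intro a ha
    simp only [fixSeqD, Multiset.mem_dedup, Multiset.mem_add] at ha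
    rcases ha with h | h
    · exact ⟨a, h, 0, Nat.zero_le _, by simp⟩
    · obtain ⟨s, hs, hmem⟩ := phi_mem_decomp φ hφ0 hφadd _ a h
      obtain ⟨r, hr, k, hk, hsk⟩ := ih s hs
      refine ⟨r, hr, k + 1, Nat.succ_le_succ hk, ?_⟩
      rw [Function.iterate_succ_apply']
      exact Multiset.mem_of_le (phi_mono φ hφadd (Multiset.singleton_le.mpr hsk)) hmem
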